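/- arXiv:2509.19829 — 2 statements merged into one kernel-verified Lean document; each statement's English description precedes it below -/
import Mathlib

section
/- Let B be a Blaschke product with Property 𝔅 and let θ ∈ (0,1). Then every connected component of the level set Ω_{B,θ} = {z ∈ 𝔻 : |B(z)| < θ} contains at least one zero of B and only finitely many zeros of B. -/
/-!
On a component `Ω` of `{|B| < θ}` whose closure stays inside `𝔻`, continuity forces `|B| = θ` on
the frontier of `Ω`. If `B` had no zero in `Ω`, the maximum modulus principle for `1 / B` on `Ω`
would give `|B| ≥ θ` throughout `Ω`. The zeros of `B` in `Ω` lie in the compact set `closure Ω`,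
and `B` is not identically zero, so by the isolated zeros principle there are finitely many.
Holomorphy of `B` comes from the locally uniform convergence of the Blaschke product, which follows
from `|b_a(z) - 1| ≤ (1 - |a|) (1 + r) / (1 - r)` for `|z| ≤ r`.
-/

noncomputable section

/-- The level set Ω_{f,θ} = {z ∈ 𝔻 : |f(z)| < θ}. -/
def levelSet (f : ℂ → ℂ) (θ : ℝ) : Set ℂ :=
  {z : ℂ | ‖z‖ < 1 ∧ ‖f z‖ < θ}

/-- An inner function: holomorphic and bounded by 1 on 𝔻, with radial limits of modulus 1 a.e. -/
def IsInner (u : ℂ → ℂ) : Prop :=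
  DifferentiableOn ℂ u (Metric.ball (0:ℂ) 1) ∧
  (∀ z ∈ Metric.ball (0:ℂ) 1, ‖u z‖ ≤ 1) ∧
  (∀ᵐ θ : ℝ ∂MeasureTheory.volume,
    Filter.Tendsto
      (fun r : ℝ => ‖u ((r : ℂ) * Complex.exp ((θ : ℂ) * Complex.I))‖)
      (nhdsWithin 1 (Set.Iio 1)) (nhds 1))

/-- The pseudo-hyperbolic distance on 𝔻. -/
def pseudoDist (z w : ℂ) : ℝ :=
  ‖z - w‖ / ‖1 - (starRingEnd ℂ) z * w‖

/-- δ_{u,η} : sup of pseudo-hyperbolic distances of pairs lying in a common component of Ω_{u,η}. -/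
def deltaLevel (u : ℂ → ℂ) (η : ℝ) : ℝ :=
  sSup {d : ℝ | ∃ z₁ z₂ : ℂ, z₁ ∈ levelSet u η ∧
    z₂ ∈ connectedComponentIn (levelSet u η) z₁ ∧ d = pseudoDist z₁ z₂}

/-- Property 𝔅. -/
def PropertyB (u : ℂ → ℂ) : Prop :=
  ∀ θ ∈ Set.Ioo (0:ℝ) 1, ∀ z ∈ levelSet u θ,
    closure (connectedComponentIn (levelSet u θ) z) ⊆ Metric.ball (0:ℂ) 1

/-- θ-weak Property 𝔅. -/
def WeakPropertyBAt (u : ℂ → ℂ) (θ : ℝ) : Prop :=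
  θ ∈ Set.Ioo (0:ℝ) 1 ∧ ∀ z ∈ levelSet u θ,
    closure (connectedComponentIn (levelSet u θ) z) ⊆ Metric.ball (0:ℂ) 1

/-- η-weak Property 𝔥. -/
def WeakPropertyHAt (u : ℂ → ℂ) (η : ℝ) : Prop :=
  WeakPropertyBAt u η ∧ deltaLevel u η < 1

/-- Supremum norm over the unit disk. -/
def supNormD (f : ℂ → ℂ) : ℝ :=
  ⨆ z : (Metric.ball (0:ℂ) 1), ‖f (z : ℂ)‖

/-- A Blaschke product. -/
def IsBlaschkeProduct (B : ℂ → ℂ) : Prop :=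
  ∃ (ι : Type) (_ : Countable ι) (m : ℕ) (lam : ℂ) (α : ι → ℂ),
    ‖lam‖ = 1 ∧
    (∀ n, ‖α n‖ < 1 ∧ α n ≠ 0) ∧
    (Summable fun n => 1 - ‖α n‖) ∧
    ∀ z ∈ Metric.ball (0:ℂ) 1,
      B z = lam * z ^ m *
        ∏' n, ((‖α n‖ : ℂ) / α n) * ((α n - z) / (1 - (starRingEnd ℂ) (α n) * z))

/-- Order of vanishing (multiplicity of zero) via iterated derivatives. -/
def zeroOrder (f : ℂ → ℂ) (z : ℂ) : ℕ :=
  sInf {n : ℕ | iteratedDeriv n f z ≠ 0}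

open Filter Topology Metric Set

def blaschkeFactor (a z : ℂ) : ℂ :=
  ((‖a‖ : ℂ) / a) * ((a - z) / (1 - (starRingEnd ℂ) a * z))

theorem one_sub_norm_le_norm_one_sub_conj_mul {a : ℂ} (ha : ‖a‖ ≤ 1) (z : ℂ) :
    1 - ‖z‖ ≤ ‖1 - (starRingEnd ℂ) a * z‖ := by
  have hmul : ‖(starRingEnd ℂ) a * z‖ ≤ ‖z‖ := by
    rw [norm_mul, Complex.norm_conj]
    exact mul_le_of_le_one_left (norm_nonneg z) ha
  calc 1 - ‖z‖ ≤ ‖(1 : ℂ)‖ - ‖(starRingEnd ℂ) a * z‖ := by rw [norm_one]; linarith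
    _ ≤ ‖1 - (starRingEnd ℂ) a * z‖ := norm_sub_norm_le _ _

theorem one_sub_conj_mul_ne_zero {a z : ℂ} (ha : ‖a‖ ≤ 1) (hz : ‖z‖ < 1) :
    1 - (starRingEnd ℂ) a * z ≠ 0 :=
  norm_pos_iff.1 ((sub_pos.2 hz).trans_le (one_sub_norm_le_norm_one_sub_conj_mul ha z))

theorem differentiableOn_blaschkeFactor {a : ℂ} (ha : ‖a‖ ≤ 1) :
    DifferentiableOn ℂ (blaschkeFactor a) (ball 0 1) :=
  (differentiableOn_const _).mul <| (by fun_prop : DifferentiableOn ℂ (fun z => a - z) _).div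
    (by fun_prop) fun _ hz => one_sub_conj_mul_ne_zero ha (mem_ball_zero_iff.1 hz)

theorem norm_blaschkeFactor_sub_one_le {a z : ℂ} {r : ℝ} (ha : ‖a‖ ≤ 1) (ha0 : a ≠ 0)
    (hz : ‖z‖ ≤ r) (hr : r < 1) :
    ‖blaschkeFactor a z - 1‖ ≤ (1 - ‖a‖) * ((1 + r) / (1 - r)) := by
  have hd : 1 - (starRingEnd ℂ) a * z ≠ 0 := one_sub_conj_mul_ne_zero ha (hz.trans_lt hr)
  have hconj : (starRingEnd ℂ) a * a = (‖a‖ : ℂ) ^ 2 := by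
    rw [mul_comm, Complex.mul_conj, Complex.normSq_eq_norm_sq, Complex.ofReal_pow]
  have key : blaschkeFactor a z - 1
      = -(((1 - ‖a‖ : ℝ) : ℂ) * (a + ‖a‖ * z)) / (a * (1 - (starRingEnd ℂ) a * z)) := by
    rw [blaschkeFactor, div_mul_div_comm, div_sub_one (mul_ne_zero ha0 hd)]
    congr 1
    push_cast
    linear_combination z * hconj
  have hnum : ‖a + ‖a‖ * z‖ ≤ ‖a‖ * (1 + r) := by
    calc ‖a + ‖a‖ * z‖ ≤ ‖a‖ + ‖a‖ * ‖z‖ := by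
          simpa only [norm_mul, Complex.norm_real, norm_norm] using norm_add_le a (‖a‖ * z)
      _ ≤ ‖a‖ * (1 + r) := by nlinarith [norm_nonneg a]
  have hden : ‖a‖ * (1 - r) ≤ ‖a‖ * ‖1 - (starRingEnd ℂ) a * z‖ :=
    mul_le_mul_of_nonneg_left (by linarith [one_sub_norm_le_norm_one_sub_conj_mul ha z])
      (norm_nonneg a)
  calc ‖blaschkeFactor a z - 1‖
      = (1 - ‖a‖) * ‖a + ‖a‖ * z‖ / (‖a‖ * ‖1 - (starRingEnd ℂ) a * z‖) := by
        rw [key, norm_div, norm_neg, norm_mul, norm_mul, Complex.norm_real,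
          Real.norm_of_nonneg (by linarith)]
    _ ≤ (1 - ‖a‖) * (‖a‖ * (1 + r)) / (‖a‖ * (1 - r)) := by
        have : 0 < 1 - r := by linarith
        gcongr
        exact mul_nonneg (by linarith) (mul_nonneg (norm_nonneg a) (by linarith [norm_nonneg z]))
    _ = (1 - ‖a‖) * ((1 + r) / (1 - r)) := by field_simp

theorem hasProdLocallyUniformlyOn_blaschkeFactor {ι : Type*} {α : ι → ℂ}
    (hα : ∀ n, ‖α n‖ ≤ 1) (hα0 : ∀ n, α n ≠ 0) (hsum : Summable fun n => 1 - ‖α n‖) :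
    HasProdLocallyUniformlyOn (fun n => blaschkeFactor (α n))
      (fun z => ∏' n, blaschkeFactor (α n) z) (ball 0 1) := by
  refine hasProdLocallyUniformlyOn_of_of_forall_exists_nhds fun x hx => ?_
  obtain ⟨r, hxr, hr⟩ := exists_between (mem_ball_zero_iff.1 hx)
  refine ⟨closedBall 0 r, mem_nhdsWithin_of_mem_nhds
    (closedBall_mem_nhds_of_mem (mem_ball_zero_iff.2 hxr)), ?_⟩
  have hprod := Summable.hasProdUniformlyOn_one_add (f := fun n z => blaschkeFactor (α n) z - 1)
    (isCompact_closedBall 0 r) (hsum.mul_right ((1 + r) / (1 - r)))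
    (Eventually.of_forall fun n z hz =>
      norm_blaschkeFactor_sub_one_le (hα n) (hα0 n) (mem_closedBall_zero_iff.1 hz) hr)
    fun n => ((differentiableOn_blaschkeFactor (hα n)).continuousOn.mono
      (closedBall_subset_ball hr)).sub continuousOn_const
  simpa only [add_sub_cancel] using hprod

theorem IsBlaschkeProduct.differentiableOn {B : ℂ → ℂ} (hB : IsBlaschkeProduct B) :
    DifferentiableOn ℂ B (ball 0 1) := by
  obtain ⟨ι, -, m, lam, α, -, hα, hsum, hBeq⟩ := hB
  have hprod : DifferentiableOn ℂ (fun z => ∏' n, blaschkeFactor (α n) z) (ball 0 1) :=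
    TendstoLocallyUniformlyOn.differentiableOn
      (hasProdLocallyUniformlyOn_blaschkeFactor (fun n => (hα n).1.le) (fun n => (hα n).2) hsum)
      (Eventually.of_forall fun _ => DifferentiableOn.fun_finsetProd fun n _ =>
        differentiableOn_blaschkeFactor (hα n).1.le)
      isOpen_ball
  exact (((differentiableOn_const lam).mul (differentiableOn_pow m)).mul hprod).congr hBeq

theorem AnalyticOnNhd.finite_zeros_of_isCompact {𝕜 E : Type*} [NontriviallyNormedField 𝕜]
    [NormedAddCommGroup E] [NormedSpace 𝕜 E] {f : 𝕜 → E} {U K : Set 𝕜}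
    (hf : AnalyticOnNhd 𝕜 f U) (hU : IsPreconnected U) {w : 𝕜} (hw : w ∈ U) (hfw : f w ≠ 0)
    (hK : IsCompact K) (hKU : K ⊆ U) : {z ∈ K | f z = 0}.Finite := by
  have hcodisc : {z | f z ≠ 0} ∈ codiscreteWithin U :=
    (hf.eqOn_zero_or_eventually_ne_zero_of_preconnected hU).resolve_left fun h => hfw (h hw)
  refine (hK.finite_sdiff_of_mem_codiscreteWithin (codiscreteWithin_mono hKU hcodisc)).subset ?_
  rintro z ⟨hzK, hz0⟩
  exact ⟨hzK, fun h => h hz0⟩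

theorem mem_connectedComponentIn_of_mem_closure {X : Type*} [TopologicalSpace X]
    [LocallyConnectedSpace X] {L : Set X} (hL : IsOpen L) {z w : X}
    (hw : w ∈ closure (connectedComponentIn L z)) (hwL : w ∈ L) :
    w ∈ connectedComponentIn L z := by
  obtain ⟨y, hyw, hyz⟩ := mem_closure_iff_nhds.1 hw _
    (hL.connectedComponentIn.mem_nhds (mem_connectedComponentIn hwL))
  rw [connectedComponentIn_eq hyz, ← connectedComponentIn_eq hyw]
  exact mem_connectedComponentIn hwL

section LevelSet

variable {f : ℂ → ℂ} {θ : ℝ} {z : ℂ}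

theorem isOpen_levelSet (hf : ContinuousOn f (ball 0 1)) : IsOpen (levelSet f θ) := by
  have : levelSet f θ = ball 0 1 ∩ (fun z => ‖f z‖) ⁻¹' Iio θ := by
    ext; simp [levelSet]
  rw [this]
  exact hf.norm.isOpen_inter_preimage isOpen_ball isOpen_Iio

theorem norm_eq_of_mem_frontier_connectedComponentIn_levelSet (hf : ContinuousOn f (ball 0 1))
    (hcl : closure (connectedComponentIn (levelSet f θ) z) ⊆ ball 0 1) {w : ℂ}
    (hw : w ∈ frontier (connectedComponentIn (levelSet f θ) z)) : ‖f w‖ = θ := by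
  have hL : IsOpen (levelSet f θ) := isOpen_levelSet hf
  rw [hL.connectedComponentIn.frontier_eq] at hw
  obtain ⟨hw_cl, hw_not⟩ := hw
  have hw_ball := hcl hw_cl
  refine le_antisymm ?_ (not_lt.1 fun hlt => hw_not <|
    mem_connectedComponentIn_of_mem_closure hL hw_cl ⟨mem_ball_zero_iff.1 hw_ball, hlt⟩)
  exact ContinuousWithinAt.closure_le hw_cl
    (hf.norm.continuousAt (isOpen_ball.mem_nhds hw_ball)).continuousWithinAt
    continuousWithinAt_const fun y hy => (connectedComponentIn_subset _ _ hy).2.le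

theorem exists_zero_mem_connectedComponentIn_levelSet (hf : DifferentiableOn ℂ f (ball 0 1))
    (hz : z ∈ levelSet f θ) (hcl : closure (connectedComponentIn (levelSet f θ) z) ⊆ ball 0 1) :
    ∃ w ∈ connectedComponentIn (levelSet f θ) z, f w = 0 := by
  set Ω := connectedComponentIn (levelSet f θ) z
  have hθ : 0 < θ := (norm_nonneg _).trans_lt hz.2
  have hfront : ∀ w ∈ frontier Ω, ‖f w‖ = θ := fun w hw =>
    norm_eq_of_mem_frontier_connectedComponentIn_levelSet hf.continuousOn hcl hw
  by_contra! hΩ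
  have hcl_ne : ∀ w ∈ closure Ω, f w ≠ 0 := by
    intro w hw h0
    rw [closure_eq_self_union_frontier] at hw
    rcases hw with hw | hw
    · exact hΩ w hw h0
    · linarith [hfront w hw, norm_eq_zero.2 h0]
  -- Minimum modulus principle, via the maximum modulus principle for `1 / f`.
  have hinv : DiffContOnCl ℂ (fun w => (f w)⁻¹) Ω :=
    ⟨(hf.mono (subset_closure.trans hcl)).inv hΩ, (hf.continuousOn.mono hcl).inv₀ hcl_ne⟩
  have hle := Complex.norm_le_of_forall_mem_frontier_norm_le
    (isBounded_ball.subset (subset_closure.trans hcl)) hinv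
    (fun w hw => by rw [norm_inv, hfront w hw]) (subset_closure (mem_connectedComponentIn hz))
  rw [norm_inv] at hle
  have hfz : 0 < ‖f z‖ := norm_pos_iff.2 (hΩ z (mem_connectedComponentIn hz))
  exact (inv_lt_inv₀ hθ hfz |>.2 hz.2).not_ge hle

theorem finite_zeros_connectedComponentIn_levelSet (hf : DifferentiableOn ℂ f (ball 0 1))
    (hz : z ∈ levelSet f θ) (hcl : closure (connectedComponentIn (levelSet f θ) z) ⊆ ball 0 1) :
    {w ∈ connectedComponentIn (levelSet f θ) z | f w = 0}.Finite := by
  set Ω := connectedComponentIn (levelSet f θ) z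
  have hθ : 0 < θ := (norm_nonneg _).trans_lt hz.2
  have hΩ_ne_univ : Ω ≠ univ := fun h =>
    (mem_ball_zero_iff.1 (hcl (subset_closure (h ▸ mem_univ (1 : ℂ))))).ne norm_one
  obtain ⟨w, hw⟩ : (frontier Ω).Nonempty :=
    nonempty_frontier_iff.2 ⟨⟨z, mem_connectedComponentIn hz⟩, hΩ_ne_univ⟩
  have hfw : f w ≠ 0 := norm_ne_zero_iff.1 <| by
    rw [norm_eq_of_mem_frontier_connectedComponentIn_levelSet hf.continuousOn hcl hw]
    exact hθ.ne'
  refine ((hf.analyticOnNhd isOpen_ball).finite_zeros_of_isCompact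
    (convex_ball 0 1).isPreconnected (hcl (frontier_subset_closure hw)) hfw
    (isBounded_ball.subset (subset_closure.trans hcl)).isCompact_closure hcl).subset ?_
  exact fun x hx => ⟨subset_closure hx.1, hx.2⟩

end LevelSet

/-- For a Blaschke product with Property 𝔅 and θ ∈ (0,1), each component of the level set
Ω_{B,θ} contains at least one zero of B and only finitely many zeros of B. -/
theorem stmt4 (B : ℂ → ℂ) (hB : IsBlaschkeProduct B) (hPB : PropertyB B)
    (θ : ℝ) (hθ : θ ∈ Set.Ioo (0:ℝ) 1) :
    ∀ z ∈ levelSet B θ,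
      (∃ w ∈ connectedComponentIn (levelSet B θ) z, B w = 0) ∧
      Set.Finite {w ∈ connectedComponentIn (levelSet B θ) z | B w = 0} := by
  intro z hz
  have hB' := hB.differentiableOn
  have hcl := hPB θ hθ z hz
  exact ⟨exists_zero_mem_connectedComponentIn_levelSet hB' hz hcl,
    finite_zeros_connectedComponentIn_levelSet hB' hz hcl⟩

end
end

section
/- Let δ₀ ∈ (0, 1/e), and set γ = 1 + 2/√(−ln δ₀) and δ = δ₀^{1 − 1/√(−ln δ₀)}. Let B and B̃ be Blaschke products whose zero sequences (repeated according to multiplicity) {α_k}_{k∈Λ} and {β_k}_{k∈Λ} are indexed by the same set Λ and satisfy ρ(α_k, β_k) ≤ δ₀ for all k ∈ Λ. If ξ ∈ 𝔻 satisfies ρ(β_k, ξ) ≥ δ for all k ∈ Λ, then |B̃(ξ)| ≤ |B(ξ)|^{1/γ}. -/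
noncomputable section

/-!
The strong triangle inequality for the pseudo-hyperbolic distance gives
`ρ(α_k, ξ) ≥ (t - δ₀) / (1 - δ₀ t)` with `t = ρ(β_k, ξ) ∈ [δ, 1]`. The choice of `δ` and `γ`
makes `u ↦ log ((u - δ₀) / (1 - δ₀ u)) - γ log u` decreasing on `[δ, 1]`; it vanishes at `u = 1`,
so `ρ(β_k, ξ) ^ γ ≤ ρ(α_k, ξ)` for every `k`, and multiplying over `k` gives `|B̃(ξ)| ^ γ ≤ |B(ξ)|`.
-/

open ComplexConjugate Real Set

def mobius (b z : ℂ) : ℂ :=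
  (b - z) / (1 - conj b * z)

section PseudoDist

lemma norm_mobius (b z : ℂ) : ‖mobius b z‖ = pseudoDist b z :=
  norm_div _ _

lemma pseudoDist_nonneg (z w : ℂ) : 0 ≤ pseudoDist z w :=
  div_nonneg (norm_nonneg _) (norm_nonneg _)

lemma pseudoDist_comm (z w : ℂ) : pseudoDist z w = pseudoDist w z := by
  unfold pseudoDist
  rw [norm_sub_rev, ← Complex.norm_conj (1 - conj w * z)]
  simp only [map_sub, map_one, map_mul, Complex.conj_conj, mul_comm]

lemma one_sub_conj_mul_ne_zero_s16 {z w : ℂ} (hz : ‖z‖ < 1) (hw : ‖w‖ ≤ 1) :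
    1 - conj z * w ≠ 0 := by
  rw [sub_ne_zero]
  refine fun h => absurd (congrArg norm h) (ne_of_gt ?_)
  rw [norm_one, norm_mul, Complex.norm_conj]
  nlinarith [norm_nonneg z, norm_nonneg w]

lemma sq_norm_one_sub_conj_mul_sub_sq_norm_sub (z w : ℂ) :
    ‖1 - conj z * w‖ ^ 2 - ‖z - w‖ ^ 2 = (1 - ‖z‖ ^ 2) * (1 - ‖w‖ ^ 2) := by
  simp only [Complex.sq_norm, Complex.normSq_apply, Complex.sub_re, Complex.sub_im,
    Complex.one_re, Complex.one_im, Complex.mul_re, Complex.mul_im, Complex.conj_re,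
    Complex.conj_im]
  ring

lemma pseudoDist_lt_one {z w : ℂ} (hz : ‖z‖ < 1) (hw : ‖w‖ < 1) : pseudoDist z w < 1 := by
  have hpos : 0 < ‖1 - conj z * w‖ := norm_pos_iff.mpr (one_sub_conj_mul_ne_zero_s16 hz hw.le)
  rw [pseudoDist, div_lt_one hpos]
  refine lt_of_pow_lt_pow_left₀ 2 hpos.le ?_
  have h : 0 < (1 - ‖z‖ ^ 2) * (1 - ‖w‖ ^ 2) := by
    apply mul_pos <;> nlinarith [norm_nonneg z, norm_nonneg w]
  linarith [sq_norm_one_sub_conj_mul_sub_sq_norm_sub z w]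

lemma pseudoDist_mobius {b z w : ℂ} (hb : ‖b‖ < 1) (hz : ‖z‖ < 1) (hw : ‖w‖ < 1) :
    pseudoDist (mobius b z) (mobius b w) = pseudoDist z w := by
  have hbz := one_sub_conj_mul_ne_zero_s16 hb hz.le
  have hbw := one_sub_conj_mul_ne_zero_s16 hb hw.le
  have hbb := one_sub_conj_mul_ne_zero_s16 hb hb.le
  have hzb : 1 - b * conj z ≠ 0 := by
    simpa [mul_comm] using (map_ne_zero (starRingEnd ℂ)).mpr hbz
  have hsub : mobius b z - mobius b w
      = (z - w) * (conj b * b - 1) / ((1 - conj b * z) * (1 - conj b * w)) := by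
    rw [mobius, mobius, div_sub_div _ _ hbz hbw]
    ring
  have hden : 1 - conj (mobius b z) * mobius b w
      = (1 - conj b * b) * (1 - conj z * w) / ((1 - b * conj z) * (1 - conj b * w)) := by
    rw [mobius, mobius, map_div₀]
    simp only [map_sub, map_mul, Complex.conj_conj, map_one]
    rw [div_mul_div_comm, one_sub_div (mul_ne_zero hzb hbw)]
    ring
  have hnorm : ‖1 - b * conj z‖ = ‖1 - conj b * z‖ := by
    rw [← Complex.norm_conj]
    simp only [map_sub, map_one, map_mul, Complex.conj_conj, mul_comm]
  rw [pseudoDist, pseudoDist, hsub, hden, norm_div, norm_div, norm_mul, norm_mul, norm_mul,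
    norm_mul, hnorm, norm_sub_rev (conj b * b) 1,
    div_div_div_cancel_right₀ (mul_ne_zero (norm_ne_zero_iff.mpr hbz) (norm_ne_zero_iff.mpr hbw)),
    mul_comm ‖1 - conj b * b‖, mul_div_mul_right _ _ (norm_ne_zero_iff.mpr hbb)]

lemma sub_div_one_sub_mul_le_pseudoDist {a x : ℂ} (ha : ‖a‖ < 1) (hx : ‖x‖ < 1) :
    (‖x‖ - ‖a‖) / (1 - ‖a‖ * ‖x‖) ≤ pseudoDist a x := by
  have hD : 0 < 1 - ‖a‖ * ‖x‖ := by nlinarith [norm_nonneg a, norm_nonneg x]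
  have hN : 1 - ‖a‖ * ‖x‖ ≤ ‖1 - conj a * x‖ := by
    simpa [norm_mul, Complex.norm_conj] using norm_sub_norm_le (1 : ℂ) (conj a * x)
  have hP : 0 ≤ (1 - ‖a‖ ^ 2) * (1 - ‖x‖ ^ 2) := by
    apply mul_nonneg <;> nlinarith [norm_nonneg a, norm_nonneg x]
  have key : (‖a - x‖ * (1 - ‖a‖ * ‖x‖)) ^ 2 - ((‖x‖ - ‖a‖) * ‖1 - conj a * x‖) ^ 2
      = (1 - ‖a‖ ^ 2) * (1 - ‖x‖ ^ 2) * (‖1 - conj a * x‖ ^ 2 - (1 - ‖a‖ * ‖x‖) ^ 2) := by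
    linear_combination (-(1 - ‖a‖ * ‖x‖) ^ 2) * sq_norm_one_sub_conj_mul_sub_sq_norm_sub a x
  have hsq : ((‖x‖ - ‖a‖) * ‖1 - conj a * x‖) ^ 2 ≤ (‖a - x‖ * (1 - ‖a‖ * ‖x‖)) ^ 2 :=
    sub_nonneg.1 (key ▸ mul_nonneg hP (sub_nonneg.2 (pow_le_pow_left₀ hD.le hN 2)))
  rw [pseudoDist, div_le_div_iff₀ hD (hD.trans_le hN)]
  exact (le_abs_self _).trans (abs_le_of_sq_le_sq hsq (by positivity))

lemma sub_div_one_sub_mul_pseudoDist_le {b z w : ℂ} (hb : ‖b‖ < 1) (hz : ‖z‖ < 1)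
    (hw : ‖w‖ < 1) :
    (pseudoDist b w - pseudoDist b z) / (1 - pseudoDist b z * pseudoDist b w)
      ≤ pseudoDist z w := by
  have h := sub_div_one_sub_mul_le_pseudoDist (a := mobius b z) (x := mobius b w)
    ((norm_mobius b z).trans_lt (pseudoDist_lt_one hb hz))
    ((norm_mobius b w).trans_lt (pseudoDist_lt_one hb hw))
  rwa [norm_mobius, norm_mobius, pseudoDist_mobius hb hz hw] at h

end PseudoDist

section Scalar

variable {d δ γ : ℝ}

lemma one_div_sub_add_div_one_sub_mul_le (hd : 0 ≤ d) (hdδ : d < δ)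
    (hγ : 1 + d / (δ - d) + d / (1 - d) ≤ γ) {u : ℝ} (hu : u ∈ Icc δ 1) :
    1 / (u - d) + d / (1 - d * u) ≤ γ / u := by
  obtain ⟨hδu, hu1⟩ := hu
  have hu0 : 0 < u := by linarith
  have hud : 0 < u - d := by linarith
  have hdu : 0 < 1 - d * u := by nlinarith
  have h1 : d / (u - d) ≤ d / (δ - d) := div_le_div_of_nonneg_left hd (by linarith) (by linarith)
  have h2 : d * u / (1 - d * u) ≤ d / (1 - d) :=
    div_le_div₀ hd (by nlinarith) (by linarith) (by nlinarith)
  calc 1 / (u - d) + d / (1 - d * u) = (1 + d / (u - d) + d * u / (1 - d * u)) / u := by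
        field_simp
        ring
    _ ≤ γ / u := by gcongr; linarith

lemma antitoneOn_log_sub_log_sub_mul_log (hd : 0 ≤ d) (hdδ : d < δ)
    (hγ : 1 + d / (δ - d) + d / (1 - d) ≤ γ) :
    AntitoneOn (fun u => log (u - d) - log (1 - d * u) - γ * log u) (Icc δ 1) := by
  have hderiv : ∀ u ∈ Icc δ 1, HasDerivAt (fun u => log (u - d) - log (1 - d * u) - γ * log u)
      (1 / (u - d) + d / (1 - d * u) - γ / u) u := by
    rintro u ⟨hδu, hu1⟩
    have hu0 : u ≠ 0 := by linarith
    have hud : u - d ≠ 0 := by linarith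
    have hdu : 1 - d * u ≠ 0 := by nlinarith
    have H1 : HasDerivAt (fun y => log (y - d)) (1 / (u - d)) u := by
      simpa using ((hasDerivAt_id u).sub_const d).log hud
    have H2 : HasDerivAt (fun y => log (1 - d * y)) (-d / (1 - d * u)) u := by
      simpa using (((hasDerivAt_id u).const_mul d).const_sub 1).log hdu
    exact ((H1.sub H2).sub ((hasDerivAt_log hu0).const_mul γ)).congr_deriv (by ring)
  refine antitoneOn_of_deriv_nonpos (convex_Icc δ 1)
    (fun u hu => (hderiv u hu).continuousAt.continuousWithinAt)
    (fun u hu => (hderiv u (interior_subset hu)).differentiableAt.differentiableWithinAt)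
    fun u hu => ?_
  rw [(hderiv u (interior_subset hu)).deriv, sub_nonpos]
  exact one_div_sub_add_div_one_sub_mul_le hd hdδ hγ (interior_subset hu)

lemma rpow_le_sub_div_one_sub_mul (hd : 0 ≤ d) (hdδ : d < δ)
    (hγ : 1 + d / (δ - d) + d / (1 - d) ≤ γ) {t : ℝ} (ht : t ∈ Icc δ 1) :
    t ^ γ ≤ (t - d) / (1 - d * t) := by
  obtain ⟨hδt, ht1⟩ := ht
  have ht0 : 0 < t := by linarith
  have htd : 0 < t - d := by linarith
  have hdt : 0 < 1 - d * t := by nlinarith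
  have h := antitoneOn_log_sub_log_sub_mul_log hd hdδ hγ ⟨hδt, ht1⟩ ⟨hδt.trans ht1, le_rfl⟩ ht1
  simp only [mul_one, log_one, mul_zero, sub_self] at h
  rw [← log_le_log_iff (rpow_pos_of_pos ht0 γ) (div_pos htd hdt), log_rpow ht0,
    log_div htd.ne' hdt.ne']
  linarith

end Scalar

lemma pseudoDist_rpow_le_pseudoDist {d δ γ : ℝ} (hd : 0 ≤ d) (hdδ : d < δ)
    (hγ : 1 + d / (δ - d) + d / (1 - d) ≤ γ) {a b ξ : ℂ} (ha : ‖a‖ < 1) (hb : ‖b‖ < 1)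
    (hξ : ‖ξ‖ < 1) (hab : pseudoDist a b ≤ d) (hbξ : δ ≤ pseudoDist b ξ) :
    pseudoDist b ξ ^ γ ≤ pseudoDist a ξ := by
  set t := pseudoDist b ξ
  set e := pseudoDist b a
  have ht1 : t ≤ 1 := (pseudoDist_lt_one hb hξ).le
  have he : e ≤ d := (pseudoDist_comm b a).trans_le hab
  have he0 : 0 ≤ e := pseudoDist_nonneg b a
  have hdt : 0 < 1 - d * t := by nlinarith
  have het : 0 < 1 - e * t := by nlinarith
  calc t ^ γ ≤ (t - d) / (1 - d * t) := rpow_le_sub_div_one_sub_mul hd hdδ hγ ⟨hbξ, ht1⟩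
    _ ≤ (t - e) / (1 - e * t) := by
        rw [div_le_div_iff₀ hdt het]
        nlinarith [mul_nonneg (sub_nonneg.2 he) (mul_nonneg (pseudoDist_nonneg b ξ)
          (sub_nonneg.2 ht1))]
    _ ≤ pseudoDist a ξ := sub_div_one_sub_mul_pseudoDist_le hb ha hξ

section Products

variable {ι : Type*} {f g : ι → ℝ}

lemma multipliable_of_nonneg_of_le_one (h0 : ∀ i, 0 ≤ f i) (h1 : ∀ i, f i ≤ 1) :
    Multipliable f :=
  ⟨_, tendsto_atTop_ciInf (Finset.prod_anti_set_of_le_one h0 h1)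
    ⟨0, by rintro _ ⟨_, rfl⟩; exact Finset.prod_nonneg fun i _ => h0 i⟩⟩

lemma HasProd.rpow {a : ℝ} (hf : HasProd f a) (h0 : ∀ i, 0 ≤ f i) {r : ℝ} (hr : 0 ≤ r) :
    HasProd (fun i => f i ^ r) (a ^ r) :=
  ((continuousAt_rpow_const a r (Or.inr hr)).tendsto.comp hf).congr fun s =>
    (finsetProd_rpow s f (fun i _ => h0 i) r).symm

lemma hasProd_le_of_nonneg {a b : ℝ} (h0 : ∀ i, 0 ≤ f i) (h : ∀ i, f i ≤ g i)
    (hf : HasProd f a) (hg : HasProd g b) : a ≤ b :=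
  le_of_tendsto_of_tendsto' hf hg fun _ => Finset.prod_le_prod (fun i _ => h0 i) fun i _ => h i

lemma tprod_le_tprod_rpow_one_div {γ : ℝ} (hγ : 0 < γ) (hf0 : ∀ i, 0 ≤ f i)
    (hf1 : ∀ i, f i ≤ 1) (hg0 : ∀ i, 0 ≤ g i) (hg1 : ∀ i, g i ≤ 1) (h : ∀ i, f i ^ γ ≤ g i) :
    ∏' i, f i ≤ (∏' i, g i) ^ (1 / γ) := by
  have hfg : (∏' i, f i) ^ γ ≤ ∏' i, g i :=
    hasProd_le_of_nonneg (fun i => rpow_nonneg (hf0 i) γ) h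
      ((multipliable_of_nonneg_of_le_one hf0 hf1).hasProd.rpow hf0 hγ.le)
      (multipliable_of_nonneg_of_le_one hg0 hg1).hasProd
  have hf : 0 ≤ ∏' i, f i := tprod_nonneg hf0
  calc ∏' i, f i = ((∏' i, f i) ^ γ) ^ (1 / γ) := by
        rw [← rpow_mul hf, mul_one_div_cancel hγ.ne', rpow_one]
    _ ≤ (∏' i, g i) ^ (1 / γ) := rpow_le_rpow (rpow_nonneg hf γ) hfg (by positivity)

end Products

lemma lt_rpow_and_one_add_div_add_div_le {δ₀ : ℝ} (h : δ₀ ∈ Ioo 0 (1 / exp 1)) :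
    δ₀ < δ₀ ^ (1 - 1 / √(-log δ₀)) ∧
      1 + δ₀ / (δ₀ ^ (1 - 1 / √(-log δ₀)) - δ₀) + δ₀ / (1 - δ₀) ≤ 1 + 2 / √(-log δ₀) := by
  obtain ⟨h0, h1⟩ := h
  have hlog : 1 < -log δ₀ := by
    have := log_lt_log h0 h1
    rw [one_div, log_inv, log_exp] at this
    linarith
  set x := √(-log δ₀)
  have hx : 1 < x := (lt_sqrt zero_le_one).2 (by simpa using hlog)
  have hx0 : 0 < x := one_pos.trans hx
  have hδ₀ : δ₀ = exp (-x ^ 2) := by rw [sq_sqrt (by linarith), neg_neg, exp_log h0]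
  have hpow : δ₀ ^ (1 - 1 / x) = exp x * δ₀ := by
    rw [hδ₀, ← exp_mul, ← exp_add]
    congr 1
    field_simp
    ring
  have hone : exp (x ^ 2) * δ₀ = 1 := by rw [hδ₀, ← exp_add, add_neg_cancel, exp_zero]
  rw [hpow]
  refine ⟨lt_mul_left h0 (one_lt_exp_iff.2 hx0), ?_⟩
  have e1 : δ₀ / (exp x * δ₀ - δ₀) = (exp x - 1)⁻¹ := by
    rw [← sub_one_mul, div_mul_cancel_right₀ h0.ne']
  have e2 : δ₀ / (1 - δ₀) = (exp (x ^ 2) - 1)⁻¹ := by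
    rw [show 1 - δ₀ = (exp (x ^ 2) - 1) * δ₀ by rw [sub_one_mul, hone],
      div_mul_cancel_right₀ h0.ne']
  have q1 : (exp x - 1)⁻¹ ≤ x⁻¹ := inv_anti₀ hx0 (by linarith [add_one_le_exp x])
  have q2 : (exp (x ^ 2) - 1)⁻¹ ≤ x⁻¹ :=
    inv_anti₀ hx0 (by nlinarith [add_one_le_exp (x ^ 2)])
  rw [e1, e2, div_eq_mul_inv, two_mul]
  linarith

theorem stmt16_general (δ₀ : ℝ) (hδ₀ : δ₀ ∈ Set.Ioo (0:ℝ) (1 / Real.exp 1))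
    (γ δ : ℝ)
    (hγ : γ = 1 + 2 / Real.sqrt (-Real.log δ₀))
    (hδ : δ = δ₀ ^ (1 - 1 / Real.sqrt (-Real.log δ₀)))
    (Λ : Type)
    (B Bt : ℂ → ℂ)
    (α β : Λ → ℂ)
    (hαball : ∀ k, ‖α k‖ < 1) (hβball : ∀ k, ‖β k‖ < 1)
    (hBmod : ∀ z ∈ Metric.ball (0:ℂ) 1, ‖B z‖ = ∏' k, pseudoDist (α k) z)
    (hBtmod : ∀ z ∈ Metric.ball (0:ℂ) 1, ‖Bt z‖ = ∏' k, pseudoDist (β k) z)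
    (hpair : ∀ k, pseudoDist (α k) (β k) ≤ δ₀)
    (ξ : ℂ) (hξ : ξ ∈ Metric.ball (0:ℂ) 1)
    (hsep : ∀ k, δ ≤ pseudoDist (β k) ξ) :
    ‖Bt ξ‖ ≤ ‖B ξ‖ ^ (1/γ) := by
  subst hγ hδ
  obtain ⟨hδ₀δ, hslope⟩ := lt_rpow_and_one_add_div_add_div_le hδ₀
  have hξ' : ‖ξ‖ < 1 := mem_ball_zero_iff.mp hξ
  rw [hBmod ξ hξ, hBtmod ξ hξ]
  refine tprod_le_tprod_rpow_one_div (by positivity) (fun k => pseudoDist_nonneg _ _)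
    (fun k => (pseudoDist_lt_one (hβball k) hξ').le) (fun k => pseudoDist_nonneg _ _)
    (fun k => (pseudoDist_lt_one (hαball k) hξ').le) fun k => ?_
  exact pseudoDist_rpow_le_pseudoDist hδ₀.1.le hδ₀δ hslope (hαball k) (hβball k) hξ' (hpair k)
    (hsep k)

/-- If the zeros of two Blaschke products are pairwise δ₀-close and ξ keeps pseudo-hyperbolic
distance at least δ from all zeros of B̃, then |B̃(ξ)| ≤ |B(ξ)|^{1/γ}. -/
theorem stmt16 (δ₀ : ℝ) (hδ₀ : δ₀ ∈ Set.Ioo (0:ℝ) (1 / Real.exp 1))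
    (γ δ : ℝ)
    (hγ : γ = 1 + 2 / Real.sqrt (-Real.log δ₀))
    (hδ : δ = δ₀ ^ (1 - 1 / Real.sqrt (-Real.log δ₀)))
    (Λ : Type) (hΛ : Countable Λ)
    (B Bt : ℂ → ℂ) (hB : IsBlaschkeProduct B) (hBt : IsBlaschkeProduct Bt)
    (α β : Λ → ℂ)
    (hαball : ∀ k, ‖α k‖ < 1) (hβball : ∀ k, ‖β k‖ < 1)
    (hBmod : ∀ z ∈ Metric.ball (0:ℂ) 1, ‖B z‖ = ∏' k, pseudoDist (α k) z)
    (hBtmod : ∀ z ∈ Metric.ball (0:ℂ) 1, ‖Bt z‖ = ∏' k, pseudoDist (β k) z)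
    (hpair : ∀ k, pseudoDist (α k) (β k) ≤ δ₀)
    (ξ : ℂ) (hξ : ξ ∈ Metric.ball (0:ℂ) 1)
    (hsep : ∀ k, δ ≤ pseudoDist (β k) ξ) :
    ‖Bt ξ‖ ≤ ‖B ξ‖ ^ (1/γ) :=
  stmt16_general δ₀ hδ₀ γ δ hγ hδ Λ B Bt α β hαball hβball hBmod hBtmod hpair ξ hξ hsep

end
end
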